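/- arXiv:1701.02940 — 2 statements merged into one kernel-verified Lean document; each statement's English description precedes it below -/
import Mathlib

section
/- For real T ≥ 1 and ρ > 0, letting P(N) = N/(T+1)^(N-1)·exp(−TN/ρ), the first differences satisfy P(2) − P(3) > P(3) − P(4); i.e., the coverage probability decreases faster on [2,3] than on [3,4]. -/
/-! With `a = exp (-T / ρ)` and `x = a / (T + 1)` one has `P(N) = (T + 1) · N xᴺ`, and
`2x² - 6x³ + 4x⁴ = 2x²(1 - x)(1 - 2x)` is positive because `T ≥ 1` and `a < 1` force `x < 1/2`. -/

open Real

lemma nat_mul_pow_first_differences_gt {x : ℝ} (hx₀ : 0 < x) (hx : x < 1 / 2) :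
    2 * x ^ 2 - 3 * x ^ 3 > 3 * x ^ 3 - 4 * x ^ 4 := by
  have hfactor :
      2 * x ^ 2 - 3 * x ^ 3 - (3 * x ^ 3 - 4 * x ^ 4) = 2 * x ^ 2 * (1 - x) * (1 - 2 * x) := by
    ring
  have : 0 < 2 * x ^ 2 * (1 - x) * (1 - 2 * x) := by
    have : 0 < 1 - 2 * x := by linarith
    have : 0 < 1 - x := by linarith
    positivity
  linarith

lemma exp_neg_mul_div_eq_pow (T ρ : ℝ) (n : ℕ) : exp (-(T * n) / ρ) = exp (-T / ρ) ^ n := by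
  rw [← exp_nat_mul]
  ring_nf

theorem orp_coverage_first_differences (T ρ : ℝ) (hT : 1 ≤ T) (hρ : 0 < ρ) :
    (2 : ℝ) / (T + 1) ^ (1 : ℕ) * Real.exp (-(T * 2) / ρ) -
      (3 : ℝ) / (T + 1) ^ (2 : ℕ) * Real.exp (-(T * 3) / ρ) >
    (3 : ℝ) / (T + 1) ^ (2 : ℕ) * Real.exp (-(T * 3) / ρ) -
      (4 : ℝ) / (T + 1) ^ (3 : ℕ) * Real.exp (-(T * 4) / ρ) := by
  simp only [← Nat.cast_ofNat (R := ℝ), exp_neg_mul_div_eq_pow]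
  push_cast
  set a := exp (-T / ρ)
  have ha₀ : 0 < a := exp_pos _
  have ha₁ : a < 1 := exp_lt_one_iff.2 (div_neg_of_neg_of_pos (by linarith) hρ)
  have hs : (0 : ℝ) < T + 1 := by linarith
  have hx : a / (T + 1) < 1 / 2 := by rw [div_lt_iff₀ hs]; linarith
  calc _ = (T + 1) * (3 * (a / (T + 1)) ^ 3 - 4 * (a / (T + 1)) ^ 4) := by field_simp
    _ < (T + 1) * (2 * (a / (T + 1)) ^ 2 - 3 * (a / (T + 1)) ^ 3) :=
        mul_lt_mul_of_pos_left (nat_mul_pow_first_differences_gt (div_pos ha₀ hs) hx) hs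
    _ = _ := by field_simp
end

section
/- Let A follow a chi-square-type distribution with density f_A(a) = e^(−a) on a ≥ 0 (exponential with mean 1), and let B be such that conditioned on A_max = a the joint density on region R₁ = {(a,b) ∈ ℝ²₊ : a ≥ b} is f₁(a,b) = N/(N−2)! · e^(−(a+b)) b^(N-2). Then for T ≥ 1, ∫₀^∞ ∫_{T(N/ρ + b)}^∞ f₁(a,b) da db = N/(T+1)^(N-1) · e^(−TN/ρ). -/
open MeasureTheory Real Set
open scoped Nat

/-! The inner integral is an exponential tail, `e^{-T N/ρ} e^{-(T+1) b}`, so the outer one is the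
Gamma integral `∫₀^∞ b^{N-2} e^{-(T+1) b} db = (N-2)! / (T+1)^{N-1}`. -/

lemma integral_exp_neg_add_Ioi (b c : ℝ) :
    ∫ a in Ioi c, exp (-(a + b)) = exp (-(c + b)) := by
  simp_rw [neg_add, exp_add, integral_mul_const, integral_exp_neg_Ioi]

lemma integral_pow_mul_exp_neg_mul_Ioi (n : ℕ) {r : ℝ} (hr : 0 < r) :
    ∫ t in Ioi 0, t ^ n * exp (-(r * t)) = n ! / r ^ (n + 1) := by
  have h := integral_rpow_mul_exp_neg_mul_Ioi (a := n + 1) (by positivity) hr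
  rw [add_sub_cancel_right, Gamma_nat_eq_factorial, ← Nat.cast_succ, rpow_natCast,
    one_div_pow, one_div_mul_eq_div] at h
  simpa only [rpow_natCast] using h

theorem coverage_double_integral_region_R1_general (N : ℕ) (hN : 2 ≤ N) (T ρ : ℝ)
    (hT : 1 ≤ T) :
    ∫ b in Set.Ioi (0 : ℝ),
        ∫ a in Set.Ioi (T * ((N : ℝ) / ρ + b)),
          (N : ℝ) / (N - 2).factorial * Real.exp (-(a + b)) * b ^ (N - 2) =
      (N : ℝ) / (T + 1) ^ (N - 1) * Real.exp (-(T * N) / ρ) := by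
  set K : ℝ := (N : ℝ) / (N - 2)!
  have inner (b : ℝ) :
      ∫ a in Ioi (T * ((N : ℝ) / ρ + b)), K * exp (-(a + b)) * b ^ (N - 2) =
        K * exp (-(T * N) / ρ) * (b ^ (N - 2) * exp (-((T + 1) * b))) := by
    rw [integral_mul_const, integral_const_mul, integral_exp_neg_add_Ioi,
      show -(T * ((N : ℝ) / ρ + b) + b) = -(T * N) / ρ + -((T + 1) * b) by ring, exp_add]
    ring
  have hN1 : N - 2 + 1 = N - 1 := by omega
  simp_rw [inner, integral_const_mul,
    integral_pow_mul_exp_neg_mul_Ioi (N - 2) (by linarith : (0 : ℝ) < T + 1), hN1, K]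
  field_simp

theorem coverage_double_integral_region_R1 (N : ℕ) (hN : 2 ≤ N) (T ρ : ℝ)
    (hT : 1 ≤ T) (hρ : 0 < ρ) :
    ∫ b in Set.Ioi (0 : ℝ),
        ∫ a in Set.Ioi (T * ((N : ℝ) / ρ + b)),
          (N : ℝ) / (N - 2).factorial * Real.exp (-(a + b)) * b ^ (N - 2) =
      (N : ℝ) / (T + 1) ^ (N - 1) * Real.exp (-(T * N) / ρ) :=
  coverage_double_integral_region_R1_general N hN T ρ hT
end
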